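/- arXiv:2602.11991 — 3 statements merged into one kernel-verified Lean document; each statement's English description precedes it below -/
import Mathlib

section
/- Let u be a C² real-valued function on an open subset of ℝⁿ. Set z = |∇u|², A the n×n matrix with entries a^{ij} = δ^{ij} − u_i u_j/(1+z), ∇z the gradient of z, and g = tr(A ∇²u) = a^{ij} u_{ij}. Then at every point, ‖∇²u‖² ≥ (1/n) g² + (2+z)/(4(1+z)²) · |∇z|². -/
open Finset in
lemma algebra_key {n : ℕ} (p : Fin n → ℝ) (H : Fin n → Fin n → ℝ)
    (hH : ∀ i j, H i j = H j i) :
    (1 / (n : ℝ)) *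
        (∑ i, ∑ j, ((if i = j then (1:ℝ) else 0)
            - p i * p j / (1 + ∑ k, p k ^ 2)) * H i j) ^ 2
      + (2 + ∑ k, p k ^ 2) / (4 * (1 + ∑ k, p k ^ 2) ^ 2)
          * ∑ j, (2 * ∑ k, p k * H j k) ^ 2
      ≤ ∑ i, ∑ j, H i j ^ 2 := by
  set z : ℝ := ∑ k, p k ^ 2 with hzdef
  have hz : 0 ≤ z := Finset.sum_nonneg fun k _ => sq_nonneg _
  have hz1 : (0:ℝ) < 1 + z := by linarith
  set q : Fin n → ℝ := fun j => ∑ k, p k * H k j with hqdef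
  set M : Fin n → Fin n → ℝ := fun i j => H i j - p i * q j / (1 + z) with hMdef
  -- q via symmetric rows
  have hqrow : ∀ j, ∑ k, p k * H j k = q j := by
    intro j; simp only [hqdef]
    exact Finset.sum_congr rfl fun k _ => by rw [hH j k]
  -- trace identity
  have htr : (∑ i, ∑ j, ((if i = j then (1:ℝ) else 0) - p i * p j / (1 + z)) * H i j)
      = ∑ i, M i i := by
    refine Finset.sum_congr rfl fun i _ => ?_
    have h1 : ∑ j, ((if i = j then (1:ℝ) else 0) - p i * p j / (1 + z)) * H i j
        = ∑ j, ((if i = j then (1:ℝ) else 0) * H i j - (p i / (1+z)) * (p j * H i j)) := by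
      refine Finset.sum_congr rfl fun j _ => ?_; ring
    rw [h1, Finset.sum_sub_distrib, ← Finset.mul_sum, hqrow i]
    simp [hMdef]
    ring
  -- expansion identity
  have hexp : ∑ i, ∑ j, M i j ^ 2
      = (∑ i, ∑ j, H i j ^ 2) - ((2 + z) / (1 + z) ^ 2) * ∑ j, q j ^ 2 := by
    have h1 : ∀ i j, M i j ^ 2
        = H i j ^ 2 - (2 / (1+z)) * (q j * (p i * H i j))
          + (1 / (1+z)^2) * (p i ^ 2 * q j ^ 2) := by
      intro i j; simp only [hMdef]; field_simp; ring
    have hc : ∑ i, ∑ j, q j * (p i * H i j) = ∑ j, q j ^ 2 := by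
      rw [Finset.sum_comm]
      refine Finset.sum_congr rfl fun j _ => ?_
      rw [← Finset.mul_sum]
      simp only [hqdef]; ring
    have hd : ∑ i, ∑ j, p i ^ 2 * q j ^ 2 = z * ∑ j, q j ^ 2 := by
      rw [hzdef, Finset.sum_mul]
      exact Finset.sum_congr rfl fun i _ => by rw [Finset.mul_sum]
    have h2 : ∑ i, ∑ j, M i j ^ 2
        = (∑ i, ∑ j, H i j ^ 2)
          - (2 / (1+z)) * (∑ i, ∑ j, q j * (p i * H i j))
          + (1 / (1+z)^2) * (∑ i, ∑ j, p i ^ 2 * q j ^ 2) := by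
      simp only [h1, Finset.sum_sub_distrib, Finset.sum_add_distrib, ← Finset.mul_sum]
    rw [h2, hc, hd]
    field_simp
    ring
  -- trace Cauchy
  have step1 : (1 / (n : ℝ)) * (∑ i, M i i) ^ 2 ≤ ∑ i, (M i i) ^ 2 := by
    rcases Nat.eq_zero_or_pos n with hn | hn
    · subst hn; simp
    · have h := sq_sum_le_card_mul_sum_sq (s := (Finset.univ : Finset (Fin n)))
        (f := fun i => M i i)
      simp only [Finset.card_univ, Fintype.card_fin] at h
      rw [div_mul_eq_mul_div, one_mul, div_le_iff₀ (by exact_mod_cast hn)]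
      linarith [h]
  have step2 : ∑ i, (M i i) ^ 2 ≤ ∑ i, ∑ j, M i j ^ 2 :=
    Finset.sum_le_sum fun i _ =>
      Finset.single_le_sum (fun j _ => sq_nonneg (M i j)) (Finset.mem_univ i)
  -- last term
  have hlast : (2 + z) / (4 * (1 + z) ^ 2) * ∑ j, (2 * ∑ k, p k * H j k) ^ 2
      = ((2 + z) / (1 + z) ^ 2) * ∑ j, q j ^ 2 := by
    have : ∑ j, (2 * ∑ k, p k * H j k) ^ 2 = 4 * ∑ j, q j ^ 2 := by
      rw [Finset.mul_sum]
      exact Finset.sum_congr rfl fun j _ => by rw [hqrow j]; ring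
    rw [this]; field_simp
  rw [htr, hlast]
  have := step1.trans step2
  linarith [this, hexp.ge, hexp.le]



open Metric Real Filter

noncomputable def pd1 {n : ℕ} (u : EuclideanSpace ℝ (Fin n) → ℝ) (i : Fin n)
    (x : EuclideanSpace ℝ (Fin n)) : ℝ :=
  fderiv ℝ u x (EuclideanSpace.single i 1)

noncomputable def pd2 {n : ℕ} (u : EuclideanSpace ℝ (Fin n) → ℝ) (i j : Fin n)
    (x : EuclideanSpace ℝ (Fin n)) : ℝ :=
  fderiv ℝ (pd1 u j) x (EuclideanSpace.single i 1)

/-- The coefficients `a^{ij} = δ^{ij} - u_i u_j / (1 + |∇u|²)` of the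
nondivergence form of the mean curvature operator. -/
noncomputable def aCoef {n : ℕ} (u : EuclideanSpace ℝ (Fin n) → ℝ) (i j : Fin n)
    (x : EuclideanSpace ℝ (Fin n)) : ℝ :=
  (if i = j then (1 : ℝ) else 0) - pd1 u i x * pd1 u j x / (1 + ‖gradient u x‖ ^ 2)

/-- The mean curvature operator in nondivergence form: `a^{ij} u_{ij}`. -/
noncomputable def mcOp {n : ℕ} (u : EuclideanSpace ℝ (Fin n) → ℝ)
    (x : EuclideanSpace ℝ (Fin n)) : ℝ :=
  ∑ i, ∑ j, aCoef u i j x * pd2 u i j x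

/-- the lower bound
`‖∇²u‖² ≥ (1/n) g² + (2+z)/(4(1+z)²) |∇z|²` for a `C²` function `u`, where
`g = a^{ij} u_{ij}`, `z = |∇u|²` and `z_j = 2 u_k u_{jk}`. -/
theorem hessian_norm_lower_bound (n : ℕ) (s : Set (EuclideanSpace ℝ (Fin n)))
    (hs : IsOpen s) (u : EuclideanSpace ℝ (Fin n) → ℝ) (hu : ContDiffOn ℝ 2 u s)
    (x : EuclideanSpace ℝ (Fin n)) (hx : x ∈ s) :
    (∑ i, ∑ j, pd2 u i j x ^ 2)
      ≥ (1 / (n : ℝ)) * (mcOp u x) ^ 2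
        + (2 + ‖gradient u x‖ ^ 2) / (4 * (1 + ‖gradient u x‖ ^ 2) ^ 2)
            * ∑ j, (2 * ∑ k, pd1 u k x * pd2 u j k x) ^ 2 := by
  have hcd : ContDiffAt ℝ 2 u x := hu.contDiffAt (hs.mem_nhds hx)
  have hsymm : IsSymmSndFDerivAt ℝ u x := hcd.isSymmSndFDerivAt (by simp)
  have hdf : DifferentiableAt ℝ (fderiv ℝ u) x :=
    (hcd.fderiv_right (m := 1) le_rfl).differentiableAt one_ne_zero
  have hpd2 : ∀ i j, pd2 u i j x
      = fderiv ℝ (fderiv ℝ u) x (EuclideanSpace.single i 1) (EuclideanSpace.single j 1) := by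
    intro i j
    have h : pd1 u j = fun y => fderiv ℝ u y (EuclideanSpace.single j 1) := rfl
    rw [pd2, h, fderiv_clm_apply hdf (differentiableAt_const _)]
    simp
  have hsymm2 : ∀ i j, pd2 u i j x = pd2 u j i x := by
    intro i j; rw [hpd2, hpd2, hsymm.eq]
  have hgrad : ∀ i, pd1 u i x = gradient u x i := by
    intro i
    have : (fderiv ℝ u x) (EuclideanSpace.single i 1)
        = inner ℝ (gradient u x) (EuclideanSpace.single i (1:ℝ)) := by
      rw [gradient, InnerProductSpace.toDual_symm_apply]
    rw [pd1, this, EuclideanSpace.inner_single_right]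
    simp
  have hnorm : ‖gradient u x‖ ^ 2 = ∑ i, pd1 u i x ^ 2 := by
    rw [← real_inner_self_eq_norm_sq, PiLp.inner_apply]
    exact Finset.sum_congr rfl fun i _ => by rw [hgrad i]; simp [RCLike.inner_apply]
  simp only [ge_iff_le, mcOp, aCoef, hnorm]
  exact algebra_key (fun i => pd1 u i x) (fun i j => pd2 u i j x) hsymm2
end

section
/- Let u be a C³ real-valued function on an open subset of ℝⁿ on which ∇u ≠ 0, and suppose a^{ij} u_{ij} = g on this set, where a^{ij} = δ^{ij} − u_i u_j/(1+z), z = |∇u|², and g is a C¹ function of x (e.g. g = (1+z)^{1/2} f(∇u) for C¹ f). Then at every point of this set, a^{ij} u_{ijk} u_k = (dg/dx_k) u_k + |∇z|²/(2(1+z)) − (∇z·∇u)²/(2(1+z)²), with summation over repeated indices, where z_j = 2 u_k u_{jk} and u_{ijk} denotes third partial derivatives. -/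
open Metric Real Filter Topology

noncomputable def pd3 {n : ℕ} (u : EuclideanSpace ℝ (Fin n) → ℝ) (i j k : Fin n)
    (x : EuclideanSpace ℝ (Fin n)) : ℝ :=
  fderiv ℝ (pd2 u j k) x (EuclideanSpace.single i 1)

section lemmas
variable {n : ℕ} {u : EuclideanSpace ℝ (Fin n) → ℝ} {x : EuclideanSpace ℝ (Fin n)}

lemma grad_inner (u : EuclideanSpace ℝ (Fin n) → ℝ) (x v : EuclideanSpace ℝ (Fin n)) :
    @inner ℝ _ _ (gradient u x) v = fderiv ℝ u x v := by
  simp [gradient, InnerProductSpace.toDual_symm_apply]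

lemma grad_sq (u : EuclideanSpace ℝ (Fin n) → ℝ) (x : EuclideanSpace ℝ (Fin n)) :
    ‖gradient u x‖ ^ 2 = ∑ l, (pd1 u l x) ^ 2 := by
  rw [← real_inner_self_eq_norm_sq, PiLp.inner_apply]
  refine Finset.sum_congr rfl fun l _ => ?_
  have : gradient u x l = pd1 u l x := by
    have := grad_inner u x (EuclideanSpace.single l 1)
    rwa [EuclideanSpace.inner_single_right, one_mul, RCLike.conj_to_real] at this
  simp [this, pd1, sq]

lemma pd1_contDiffAt (h : ContDiffAt ℝ 3 u x) (i : Fin n) : ContDiffAt ℝ 2 (pd1 u i) x :=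
  (h.fderiv_right (by norm_num)).clm_apply contDiffAt_const

lemma pd2_contDiffAt (h : ContDiffAt ℝ 3 u x) (i j : Fin n) : ContDiffAt ℝ 1 (pd2 u i j) x :=
  ((pd1_contDiffAt h j).fderiv_right (by norm_num)).clm_apply contDiffAt_const

lemma fderiv_apply_comm {f : EuclideanSpace ℝ (Fin n) → ℝ} (h : ContDiffAt ℝ 2 f x)
    (v w : EuclideanSpace ℝ (Fin n)) :
    fderiv ℝ (fun y => fderiv ℝ f y v) x w = fderiv ℝ (fun y => fderiv ℝ f y w) x v := by
  have hd : DifferentiableAt ℝ (fderiv ℝ f) x :=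
    (h.fderiv_right (m := 1) (by norm_num)).differentiableAt (by norm_num)
  have e1 : ∀ a : EuclideanSpace ℝ (Fin n),
      fderiv ℝ (fun y => fderiv ℝ f y a) x = (fderiv ℝ (fderiv ℝ f) x).flip a := by
    intro a
    rw [fderiv_clm_apply hd (differentiableAt_const a)]
    simp
  rw [e1, e1]
  exact h.isSymmSndFDerivAt (by simp) w v

lemma pd2_symm (h : ContDiffAt ℝ 3 u x) (i j : Fin n) : pd2 u i j x = pd2 u j i x :=
  fderiv_apply_comm (h.of_le (by norm_num)) (EuclideanSpace.single j 1) (EuclideanSpace.single i 1)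

lemma pd3_symm12 (h : ContDiffAt ℝ 3 u x) (i j k : Fin n) : pd3 u i j k x = pd3 u j i k x :=
  fderiv_apply_comm (pd1_contDiffAt h k) (EuclideanSpace.single j 1) (EuclideanSpace.single i 1)

lemma pd3_symm23 (h : ∀ᶠ y in 𝓝 x, ContDiffAt ℝ 3 u y) (i j k : Fin n) :
    pd3 u i j k x = pd3 u i k j x := by
  have hev : pd2 u j k =ᶠ[𝓝 x] pd2 u k j := h.mono fun y hy => pd2_symm hy j k
  unfold pd3
  rw [hev.fderiv_eq]

lemma pd2_def (i j : Fin n) : pd2 u i j x = fderiv ℝ (pd1 u j) x (EuclideanSpace.single i 1) := rfl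
lemma pd3_def (i j k : Fin n) :
    pd3 u i j k x = fderiv ℝ (pd2 u j k) x (EuclideanSpace.single i 1) := rfl

end lemmas


lemma final_algebra {n : ℕ} (P G : Fin n → ℝ) (Q : Fin n → Fin n → ℝ)
    (A : Fin n → Fin n → ℝ) (R : Fin n → Fin n → Fin n → ℝ) (T : ℝ) (hT : T ≠ 0)
    (hQ : ∀ i j, Q i j = Q j i)
    (hR : ∀ i j k, R i j k = R k i j)
    (hG : ∀ k, G k = ∑ i, ∑ j,
      (A i j * R k i j +
        Q i j * -(P i * P j * ((∑ l, (P l * Q k l + P l * Q k l)) * -(T ^ 2)⁻¹) +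
          T⁻¹ * (P i * Q k j + P j * Q k i)))) :
    ∑ k, (∑ i, ∑ j, A i j * R i j k) * P k
      = (∑ k, G k * P k) + (∑ j, (2 * ∑ l, P l * Q j l) ^ 2) / (2 * T)
        - (∑ j, (2 * ∑ l, P l * Q j l) * P j) ^ 2 / (2 * T ^ 2) := by
  obtain ⟨W, hW⟩ : ∃ W : Fin n → ℝ, ∀ k, W k = ∑ l, P l * Q k l := ⟨_, fun _ => rfl⟩
  obtain ⟨S, hS⟩ : ∃ S : ℝ, S = ∑ l, P l * W l := ⟨_, rfl⟩
  have hQ' : ∀ j, (∑ i, P i * Q i j) = W j := by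
    intro j
    rw [hW]
    exact Finset.sum_congr rfl fun i _ => by rw [hQ i j]
  have hW2 : ∀ k, (∑ l, (P l * Q k l + P l * Q k l)) = 2 * W k := by
    intro k
    rw [Finset.sum_add_distrib, hW]
    ring
  -- the key per-k computation
  have key : ∀ k, (∑ i, ∑ j,
      Q i j * -(P i * P j * ((∑ l, (P l * Q k l + P l * Q k l)) * -(T ^ 2)⁻¹) +
        T⁻¹ * (P i * Q k j + P j * Q k i)))
      = 2 * W k * S * (T ^ 2)⁻¹ - 2 * T⁻¹ * ∑ j, W j * Q k j := by
    intro k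
    simp only [hW2]
    have split : ∀ i j : Fin n,
        Q i j * -(P i * P j * (2 * W k * -(T ^ 2)⁻¹) + T⁻¹ * (P i * Q k j + P j * Q k i))
        = 2 * W k * (T ^ 2)⁻¹ * (P i * (P j * Q i j))
          - T⁻¹ * (P i * Q i j * Q k j) - T⁻¹ * (P j * Q i j * Q k i) := fun i j => by ring
    simp only [split, Finset.sum_sub_distrib, ← Finset.mul_sum]
    have e1 : (∑ i, P i * ∑ j, P j * Q i j) = S := by
      rw [hS]
      exact Finset.sum_congr rfl fun i _ => by rw [hW i]
    have e2 : (∑ i, ∑ j, P i * Q i j * Q k j) = ∑ j, W j * Q k j := by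
      rw [Finset.sum_comm]
      refine Finset.sum_congr rfl fun j _ => ?_
      rw [← hQ' j, Finset.sum_mul]
    have e3 : (∑ i, ∑ j, P j * Q i j * Q k i) = ∑ j, W j * Q k j := by
      have : ∀ i, (∑ j, P j * Q i j * Q k i) = W i * Q k i := by
        intro i
        rw [hW i, Finset.sum_mul]
      simp only [this]
    rw [e1, e2, e3]
    ring
  have hGP : ∑ k, G k * P k
      = ∑ k, (∑ i, ∑ j, A i j * R k i j) * P k
        + ∑ k, (2 * W k * S * (T ^ 2)⁻¹ - 2 * T⁻¹ * ∑ j, W j * Q k j) * P k := by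
    rw [← Finset.sum_add_distrib]
    refine Finset.sum_congr rfl fun k _ => ?_
    rw [hG k, ← add_mul]
    congr 1
    rw [← key k, ← Finset.sum_add_distrib]
    exact Finset.sum_congr rfl fun i _ => Finset.sum_add_distrib
  have hsum : ∑ k, (2 * W k * S * (T ^ 2)⁻¹ - 2 * T⁻¹ * ∑ j, W j * Q k j) * P k
      = 2 * S * S * (T ^ 2)⁻¹ - 2 * T⁻¹ * ∑ j, W j * W j := by
    have t1 : ∀ k, (2 * W k * S * (T ^ 2)⁻¹ - 2 * T⁻¹ * ∑ j, W j * Q k j) * P k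
        = 2 * S * (T ^ 2)⁻¹ * (P k * W k) - 2 * T⁻¹ * ((∑ j, W j * Q k j) * P k) :=
      fun k => by ring
    simp only [t1]
    rw [Finset.sum_sub_distrib, ← Finset.mul_sum, ← Finset.mul_sum]
    have u2 : ∑ k, (∑ j, W j * Q k j) * P k = ∑ j, W j * W j := by
      simp only [Finset.sum_mul]
      rw [Finset.sum_comm]
      refine Finset.sum_congr rfl fun j _ => ?_
      have : ∀ k, W j * Q k j * P k = W j * (P k * Q k j) := fun k => by ring
      simp only [this, ← Finset.mul_sum, hQ' j]
    rw [← hS, u2]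
    ring
  have hL : ∀ k, (∑ i, ∑ j, A i j * R i j k) = ∑ i, ∑ j, A i j * R k i j := by
    intro k
    exact Finset.sum_congr rfl fun i _ => Finset.sum_congr rfl fun j _ => by rw [hR i j k]
  have hB : (∑ j, (2 * ∑ l, P l * Q j l) ^ 2) = 4 * ∑ j, W j * W j := by
    rw [Finset.mul_sum]
    refine Finset.sum_congr rfl fun j _ => ?_
    rw [← hW j]
    ring
  have hC : (∑ j, (2 * ∑ l, P l * Q j l) * P j) = 2 * S := by
    rw [hS, Finset.mul_sum]
    refine Finset.sum_congr rfl fun j _ => ?_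
    rw [← hW j]
    ring
  simp only [hL]
  rw [hGP, hsum, hB, hC]
  field_simp
  ring

/-- differentiating the equation `a^{ij} u_{ij} = g`:
`a^{ij} u_{ijk} u_k = (dg/dx_k) u_k + |∇z|²/(2(1+z)) − (∇z·∇u)²/(2(1+z)²)`
on an open set where `u` is `C³` and `∇u ≠ 0`. -/
theorem differentiated_equation_identity (n : ℕ)
    (s : Set (EuclideanSpace ℝ (Fin n))) (hs : IsOpen s)
    (u : EuclideanSpace ℝ (Fin n) → ℝ) (hu : ContDiffOn ℝ 3 u s)
    (hgrad : ∀ x ∈ s, gradient u x ≠ 0)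
    (g : EuclideanSpace ℝ (Fin n) → ℝ) (hg : ContDiffOn ℝ 1 g s)
    (heq : ∀ x ∈ s, mcOp u x = g x) :
    ∀ x ∈ s,
      ∑ k, (∑ i, ∑ j, aCoef u i j x * pd3 u i j k x) * pd1 u k x
        = (∑ k, pd1 g k x * pd1 u k x)
          + (∑ j, (2 * ∑ l, pd1 u l x * pd2 u j l x) ^ 2)
              / (2 * (1 + ‖gradient u x‖ ^ 2))
          - (∑ j, (2 * ∑ l, pd1 u l x * pd2 u j l x) * pd1 u j x) ^ 2
              / (2 * (1 + ‖gradient u x‖ ^ 2) ^ 2) := by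
  intro x hx
  have hxn : s ∈ 𝓝 x := hs.mem_nhds hx
  have hu3 : ∀ y ∈ s, ContDiffAt ℝ 3 u y := fun y hy => hu.contDiffAt (hs.mem_nhds hy)
  have hd1 : ∀ i : Fin n, DifferentiableAt ℝ (pd1 u i) x :=
    fun i => (pd1_contDiffAt (hu3 x hx) i).differentiableAt (by norm_num)
  have hd2 : ∀ i j : Fin n, DifferentiableAt ℝ (pd2 u i j) x :=
    fun i j => (pd2_contDiffAt (hu3 x hx) i j).differentiableAt one_ne_zero
  have h1 : ∀ i : Fin n, HasFDerivAt (pd1 u i) (fderiv ℝ (pd1 u i) x) x :=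
    fun i => (hd1 i).hasFDerivAt
  have h2 : ∀ i j : Fin n, HasFDerivAt (pd2 u i j) (fderiv ℝ (pd2 u i j) x) x :=
    fun i j => (hd2 i j).hasFDerivAt
  -- the denominator function
  set Zf : EuclideanSpace ℝ (Fin n) → ℝ := fun y => 1 + ∑ l, pd1 u l y * pd1 u l y with hZf
  have hTpos : (0:ℝ) < Zf x := by
    have : (0:ℝ) ≤ ∑ l, pd1 u l x * pd1 u l x :=
      Finset.sum_nonneg fun l _ => mul_self_nonneg _
    simp only [hZf]; linarith
  have haC : ∀ i j : Fin n, aCoef u i j =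
      fun y => (if i = j then (1:ℝ) else 0) - pd1 u i y * pd1 u j y * (Zf y)⁻¹ := by
    intro i j
    funext y
    rw [aCoef, grad_sq, div_eq_mul_inv]
    simp only [hZf, pow_two]
  have hden : HasFDerivAt Zf
      (∑ l, (pd1 u l x • fderiv ℝ (pd1 u l) x + pd1 u l x • fderiv ℝ (pd1 u l) x)) x :=
    (HasFDerivAt.fun_sum (fun l _ => (h1 l).mul (h1 l))).const_add 1
  have hinv : HasFDerivAt (fun y => (Zf y)⁻¹)
      ((ContinuousLinearMap.smulRight (1 : ℝ →L[ℝ] ℝ) (-(Zf x ^ 2)⁻¹)).comp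
        (∑ l, (pd1 u l x • fderiv ℝ (pd1 u l) x + pd1 u l x • fderiv ℝ (pd1 u l) x))) x :=
    (hasFDerivAt_inv hTpos.ne').comp x hden
  have haij : ∀ i j : Fin n, HasFDerivAt (aCoef u i j)
      (-((pd1 u i x * pd1 u j x) •
          ((ContinuousLinearMap.smulRight (1 : ℝ →L[ℝ] ℝ) (-(Zf x ^ 2)⁻¹)).comp
            (∑ l, (pd1 u l x • fderiv ℝ (pd1 u l) x + pd1 u l x • fderiv ℝ (pd1 u l) x))) +
        (Zf x)⁻¹ • (pd1 u i x • fderiv ℝ (pd1 u j) x + pd1 u j x • fderiv ℝ (pd1 u i) x))) x := by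
    intro i j
    rw [haC i j]
    exact (((h1 i).mul (h1 j)).mul hinv).const_sub _
  have hmc : HasFDerivAt (mcOp u)
      (∑ i, ∑ j, (aCoef u i j x • fderiv ℝ (pd2 u i j) x +
        pd2 u i j x • (-((pd1 u i x * pd1 u j x) •
          ((ContinuousLinearMap.smulRight (1 : ℝ →L[ℝ] ℝ) (-(Zf x ^ 2)⁻¹)).comp
            (∑ l, (pd1 u l x • fderiv ℝ (pd1 u l) x + pd1 u l x • fderiv ℝ (pd1 u l) x))) +
        (Zf x)⁻¹ • (pd1 u i x • fderiv ℝ (pd1 u j) x + pd1 u j x • fderiv ℝ (pd1 u i) x))))) x := by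
    unfold mcOp
    exact HasFDerivAt.fun_sum fun i _ => HasFDerivAt.fun_sum fun j _ => (haij i j).mul (h2 i j)
  have hgF : HasFDerivAt g _ x :=
    hmc.congr_of_eventuallyEq (Filter.eventuallyEq_of_mem hxn fun y hy => (heq y hy).symm)
  have hkey : ∀ k : Fin n, pd1 g k x = _ := fun k => by rw [pd1, hgF.fderiv]
  have hkey2 : ∀ k : Fin n, pd1 g k x = ∑ i, ∑ j,
      (aCoef u i j x * pd3 u k i j x +
        pd2 u i j x * -(pd1 u i x * pd1 u j x *
            ((∑ l, (pd1 u l x * pd2 u k l x + pd1 u l x * pd2 u k l x)) * -(Zf x ^ 2)⁻¹) +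
          (Zf x)⁻¹ * (pd1 u i x * pd2 u k j x + pd1 u j x * pd2 u k i x))) := by
    intro k
    have hh := hkey k
    simp only [ContinuousLinearMap.sum_apply, ContinuousLinearMap.add_apply,
      ContinuousLinearMap.coe_smul', Pi.smul_apply, ContinuousLinearMap.neg_apply,
      ContinuousLinearMap.comp_apply, ContinuousLinearMap.smulRight_apply,
      ContinuousLinearMap.one_apply, smul_eq_mul, ← pd2_def, ← pd3_def] at hh
    exact hh
  have hRsym : ∀ i j k : Fin n, pd3 u i j k x = pd3 u k i j x := by
    intro i j k
    have h23 : pd3 u i j k x = pd3 u i k j x :=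
      pd3_symm23 (Filter.eventually_of_mem hxn fun y hy => hu3 y hy) i j k
    rw [h23, pd3_symm12 (hu3 x hx) i k j]
  have hgsq : (1 : ℝ) + ‖gradient u x‖ ^ 2 = Zf x := by
    rw [grad_sq]
    simp only [hZf, pow_two]
  rw [hgsq]
  exact final_algebra (fun i => pd1 u i x) (fun k => pd1 g k x) (fun i j => pd2 u i j x)
    (fun i j => aCoef u i j x) (fun i j k => pd3 u i j k x) (Zf x) hTpos.ne'
    (fun i j => pd2_symm (hu3 x hx) i j) hRsym hkey2
end

section
/- Let R > 0, α ≥ 1, φ(x) = (1 − |x|²/R²)^α on B_R(0) ⊂ ℝⁿ, and let p ∈ ℝⁿ be arbitrary. Define the matrix a^{ij} = δ^{ij} − p_i p_j/(1+|p|²). Then there exists a constant C depending only on n and α such that for all x ∈ B_R(0), a^{ij} ( φ_{ij}(x)/φ(x) − φ_i(x) φ_j(x)/φ(x)² ) ≥ − C / (R² φ(x)^{2/α}), with summation over i, j. -/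
open Metric Real Filter

/-- The cut-off function `φ(x) = (1 − |x|²/R²)^α`. -/
noncomputable def cutoff (n : ℕ) (R α : ℝ) (x : EuclideanSpace ℝ (Fin n)) : ℝ :=
  (1 - ‖x‖ ^ 2 / R ^ 2) ^ α

lemma hasFDerivAt_rpow_aux {n : ℕ} (R β : ℝ) (x : EuclideanSpace ℝ (Fin n))
    (hx : (1 : ℝ) - ‖x‖ ^ 2 / R ^ 2 ≠ 0) :
    HasFDerivAt (fun y : EuclideanSpace ℝ (Fin n) => (1 - ‖y‖ ^ 2 / R ^ 2) ^ β)
      ((β * (1 - ‖x‖ ^ 2 / R ^ 2) ^ (β - 1) * (-(2 / R ^ 2))) • innerSL ℝ x) x := by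
  have hg : HasFDerivAt (fun y : EuclideanSpace ℝ (Fin n) => 1 - ‖y‖ ^ 2 / R ^ 2)
      ((-(2 / R ^ 2)) • innerSL ℝ x) x := by
    have h2 := ((hasFDerivAt_id x).norm_sq.const_mul ((R ^ 2)⁻¹)).const_sub 1
    have heq : (fun y : EuclideanSpace ℝ (Fin n) => 1 - (R ^ 2)⁻¹ * ‖id y‖ ^ 2)
        = (fun y : EuclideanSpace ℝ (Fin n) => 1 - ‖y‖ ^ 2 / R ^ 2) := by
      funext y; simp [div_eq_inv_mul]
    rw [heq] at h2
    refine h2.congr_fderiv ?_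
    ext v
    simp [two_smul]
    ring
  have hr := (Real.hasDerivAt_rpow_const (p := β) (Or.inl hx)).comp_hasFDerivAt x hg
  rw [smul_smul] at hr
  exact hr

lemma pd1_cutoff_eq {n : ℕ} (R α : ℝ) (x : EuclideanSpace ℝ (Fin n))
    (hx : (1 : ℝ) - ‖x‖ ^ 2 / R ^ 2 ≠ 0) (j : Fin n) :
    pd1 (cutoff n R α) j x
      = α * ((1 - ‖x‖ ^ 2 / R ^ 2) ^ (α - 1) * (-(2 / R ^ 2) * x j)) := by
  have h := (hasFDerivAt_rpow_aux R α x hx).fderiv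
  unfold pd1
  rw [show cutoff n R α = (fun y : EuclideanSpace ℝ (Fin n) =>
    (1 - ‖y‖ ^ 2 / R ^ 2) ^ α) from rfl, h]
  simp [EuclideanSpace.inner_single_right]
  ring

lemma pd2_cutoff_eq {n : ℕ} (R α : ℝ) (x : EuclideanSpace ℝ (Fin n))
    (hx : (1 : ℝ) - ‖x‖ ^ 2 / R ^ 2 ≠ 0) (i j : Fin n) :
    pd2 (cutoff n R α) i j x
      = α * (((α - 1) * (1 - ‖x‖ ^ 2 / R ^ 2) ^ (α - 1 - 1) * (-(2 / R ^ 2)) * x i)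
              * (-(2 / R ^ 2) * x j)
          + (1 - ‖x‖ ^ 2 / R ^ 2) ^ (α - 1) * (-(2 / R ^ 2))
              * (if j = i then 1 else 0)) := by
  have hA := hasFDerivAt_rpow_aux R (α - 1) x hx
  have hB : HasFDerivAt (fun y : EuclideanSpace ℝ (Fin n) => -(2 / R ^ 2) * y j)
      ((-(2 / R ^ 2)) • (EuclideanSpace.proj j (𝕜 := ℝ))) x :=
    ((EuclideanSpace.proj j (𝕜 := ℝ)).hasFDerivAt).const_mul _
  have hAB : HasFDerivAt (fun y : EuclideanSpace ℝ (Fin n) =>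
      α * ((1 - ‖y‖ ^ 2 / R ^ 2) ^ (α - 1) * (-(2 / R ^ 2) * y j))) _ x :=
    (hA.mul hB).const_mul α
  have hopen : IsOpen {y : EuclideanSpace ℝ (Fin n) | (1 : ℝ) - ‖y‖ ^ 2 / R ^ 2 ≠ 0} := by
    have hc : Continuous fun y : EuclideanSpace ℝ (Fin n) => 1 - ‖y‖ ^ 2 / R ^ 2 := by
      fun_prop
    exact isOpen_compl_singleton.preimage hc
  have hev : pd1 (cutoff n R α) j =ᶠ[nhds x]
      (fun y : EuclideanSpace ℝ (Fin n) =>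
        α * ((1 - ‖y‖ ^ 2 / R ^ 2) ^ (α - 1) * (-(2 / R ^ 2) * y j))) := by
    filter_upwards [hopen.mem_nhds hx] with y hy using pd1_cutoff_eq R α y hy j
  unfold pd2
  rw [hev.fderiv_eq, hAB.fderiv]
  simp [EuclideanSpace.inner_single_right, EuclideanSpace.single_apply]
  split_ifs <;> ring

lemma sum_aij_quadratic {n : ℕ} (p x : EuclideanSpace ℝ (Fin n)) (s : ℝ) (c1 c2 : ℝ) :
    ∑ i, ∑ j, ((if i = j then (1:ℝ) else 0) - p i * p j / s) *
        (c1 * (x i * x j) + c2 * (if i = j then (1:ℝ) else 0))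
      = c1 * (∑ i, x i * x i) + c2 * n
        - (c1 / s) * ((∑ i, p i * x i) * (∑ j, p j * x j))
        - (c2 / s) * (∑ i, p i * p i) := by
  have expand : ∀ i j : Fin n,
      ((if i = j then (1:ℝ) else 0) - p i * p j / s) *
        (c1 * (x i * x j) + c2 * (if i = j then (1:ℝ) else 0))
      = (c1 * (if i = j then x i * x j else 0) + c2 * (if i = j then (1:ℝ) else 0))
        - ((c1 / s) * ((p i * x i) * (p j * x j))
           + (c2 / s) * (if i = j then p i * p i else 0)) := by
    intro i j
    split_ifs with h
    · subst h; ring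
    · ring
  have key2 : ∑ i : Fin n, ∑ j : Fin n, p i * x i * (p j * x j)
      = (∑ i, p i * x i) * (∑ j, p j * x j) := (Finset.sum_mul_sum _ _ _ _).symm
  simp only [expand, Finset.sum_sub_distrib, Finset.sum_add_distrib,
    Finset.sum_ite_eq, Finset.mem_univ, if_true, ← Finset.mul_sum,
    Finset.sum_const, Finset.card_univ, Fintype.card_fin, nsmul_eq_mul, key2]
  rw [← Finset.sum_mul]
  ring

/-- the lower bound
`a^{ij} (φ_{ij}/φ − φ_i φ_j/φ²) ≥ −C/(R² φ^{2/α})` for the cut-off function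
`φ(x) = (1 − |x|²/R²)^α` and the matrix `a^{ij} = δ^{ij} − p_i p_j/(1+|p|²)`,
with `C` depending only on `n` and `α`. -/
theorem cutoff_aij_lower_bound (n : ℕ) (hn : 1 ≤ n) (α : ℝ) (hα : 1 ≤ α) :
    ∃ C > 0, ∀ R : ℝ, 0 < R → ∀ p : EuclideanSpace ℝ (Fin n),
      ∀ x ∈ ball (0 : EuclideanSpace ℝ (Fin n)) R,
        ∑ i, ∑ j,
          ((if i = j then (1 : ℝ) else 0) - p i * p j / (1 + ‖p‖ ^ 2)) *
            (pd2 (cutoff n R α) i j x / cutoff n R α x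
              - pd1 (cutoff n R α) i x * pd1 (cutoff n R α) j x
                  / cutoff n R α x ^ 2)
          ≥ -C / (R ^ 2 * cutoff n R α x ^ ((2 : ℝ) / α)) := by
  have hα0 : (0:ℝ) < α := lt_of_lt_of_le one_pos hα
  refine ⟨2 * α * (n + 2), by positivity, ?_⟩
  intro R hR p x hx
  have hxR : ‖x‖ < R := by simpa [mem_ball_zero_iff] using hx
  have hR2 : (0:ℝ) < R ^ 2 := by positivity
  have hx2 : ‖x‖ ^ 2 < R ^ 2 := by
    have := pow_lt_pow_left₀ hxR (norm_nonneg x) (two_ne_zero)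
    exact this
  have hg0 : 0 < 1 - ‖x‖ ^ 2 / R ^ 2 := by
    rw [sub_pos, div_lt_one hR2]; exact hx2
  have hg1 : 1 - ‖x‖ ^ 2 / R ^ 2 ≤ 1 := by
    have : 0 ≤ ‖x‖ ^ 2 / R ^ 2 := by positivity
    linarith
  have hgne : (1:ℝ) - ‖x‖ ^ 2 / R ^ 2 ≠ 0 := ne_of_gt hg0
  have hcut : cutoff n R α x = (1 - ‖x‖ ^ 2 / R ^ 2) ^ α := rfl
  have hφ : 0 < (1 - ‖x‖ ^ 2 / R ^ 2) ^ α := Real.rpow_pos_of_pos hg0 α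
  have hs : (0:ℝ) < 1 + ‖p‖ ^ 2 := by positivity
  set g : ℝ := 1 - ‖x‖ ^ 2 / R ^ 2 with hgdef
  set c1 : ℝ := -(4 * α / (R ^ 4 * g ^ 2)) with hc1
  set c2 : ℝ := -(2 * α / (R ^ 2 * g)) with hc2
  have e1 : g ^ (α - 1) = g ^ α / g := by
    rw [Real.rpow_sub hg0, Real.rpow_one]
  have e2 : g ^ (α - 1 - 1) = g ^ α / g ^ 2 := by
    rw [Real.rpow_sub hg0, e1, Real.rpow_one, div_div, sq]
  have key : ∀ i j : Fin n,
      pd2 (cutoff n R α) i j x / cutoff n R α x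
        - pd1 (cutoff n R α) i x * pd1 (cutoff n R α) j x / cutoff n R α x ^ 2
      = c1 * (x i * x j) + c2 * (if i = j then (1:ℝ) else 0) := by
    intro i j
    rw [hcut, pd2_cutoff_eq R α x hgne i j, pd1_cutoff_eq R α x hgne i,
      pd1_cutoff_eq R α x hgne j]
    rw [show (if j = i then (1:ℝ) else 0) = (if i = j then (1:ℝ) else 0) by
      simp [eq_comm]]
    rw [← hgdef, e1, e2, hc1, hc2]
    have hPne : g ^ α ≠ 0 := ne_of_gt hφ
    have hRne : R ≠ 0 := ne_of_gt hR
    have hgne' : g ≠ 0 := hgne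
    rcases eq_or_ne i j with h | h
    · simp only [h, if_true]
      field_simp
      ring
    · simp only [h, if_false]
      field_simp
      ring
  clear_value g c1 c2
  rw [Finset.sum_congr rfl fun i _ => Finset.sum_congr rfl fun j _ => by
    rw [key i j]]
  rw [sum_aij_quadratic p x (1 + ‖p‖ ^ 2) c1 c2]
  -- bounds
  have hxx : (∑ i, x i * x i) = ‖x‖ ^ 2 := by
    have h := EuclideanSpace.norm_eq x
    rw [show ‖x‖ ^ 2 = ∑ i, x i ^ 2 by
      rw [h, Real.sq_sqrt (by positivity)]; simp [sq_abs]]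
    simp [sq]
  have hY : 0 ≤ (∑ i, p i * x i) * (∑ j, p j * x j) := mul_self_nonneg _
  have hZ : 0 ≤ ∑ i, p i * p i := Finset.sum_nonneg fun i _ => mul_self_nonneg _
  have hc1neg : c1 < 0 := by rw [hc1]; have : 0 < 4 * α / (R ^ 4 * g ^ 2) := by positivity
                             linarith
  have hc2neg : c2 < 0 := by rw [hc2]; have : 0 < 2 * α / (R ^ 2 * g) := by positivity
                             linarith
  have hc1s : c1 / (1 + ‖p‖ ^ 2) ≤ 0 := div_nonpos_of_nonpos_of_nonneg hc1neg.le hs.le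
  have hc2s : c2 / (1 + ‖p‖ ^ 2) ≤ 0 := div_nonpos_of_nonpos_of_nonneg hc2neg.le hs.le
  have step1 : c1 * (∑ i, x i * x i) + c2 * n
        - (c1 / (1 + ‖p‖ ^ 2)) * ((∑ i, p i * x i) * (∑ j, p j * x j))
        - (c2 / (1 + ‖p‖ ^ 2)) * (∑ i, p i * p i)
      ≥ c1 * R ^ 2 + c2 * n := by
    rw [hxx]
    have h1 : c1 * R ^ 2 ≤ c1 * ‖x‖ ^ 2 :=
      mul_le_mul_of_nonpos_left hx2.le hc1neg.le
    have h2 : (c1 / (1 + ‖p‖ ^ 2)) * ((∑ i, p i * x i) * (∑ j, p j * x j)) ≤ 0 :=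
      mul_nonpos_of_nonpos_of_nonneg hc1s hY
    have h3 : (c2 / (1 + ‖p‖ ^ 2)) * (∑ i, p i * p i) ≤ 0 :=
      mul_nonpos_of_nonpos_of_nonneg hc2s hZ
    nlinarith [h1, h2, h3]
  have hgsq : 0 < g ^ 2 := by positivity
  have step2 : c1 * R ^ 2 + c2 * n ≥ -(2 * α * (n + 2)) / (R ^ 2 * g ^ 2) := by
    rw [hc1, hc2, ge_iff_le, div_le_iff₀ (by positivity : (0:ℝ) < R ^ 2 * g ^ 2)]
    have hRne : R ≠ 0 := ne_of_gt hR
    have hgne' : g ≠ 0 := hgne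
    have expand : (-(4 * α / (R ^ 4 * g ^ 2)) * R ^ 2 + -(2 * α / (R ^ 2 * g)) * (n:ℝ))
        * (R ^ 2 * g ^ 2) = -(4 * α) - 2 * α * n * g := by
      field_simp
      ring
    rw [expand]
    have hint : 0 ≤ α * (n:ℝ) * (1 - g) :=
      mul_nonneg (mul_nonneg hα0.le (Nat.cast_nonneg n)) (sub_nonneg.2 hg1)
    linarith [hint]
  have hpow : cutoff n R α x ^ ((2:ℝ)/α) = g ^ 2 := by
    rw [hcut, ← Real.rpow_mul hg0.le, show α * ((2:ℝ)/α) = 2 by field_simp,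
      show (2:ℝ) = ((2:ℕ):ℝ) by norm_num, Real.rpow_natCast]
  rw [hpow]
  exact le_trans step2 step1
end
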